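/- arXiv:1602.08912 — 2 statements merged into one kernel-verified Lean document; each statement's English description precedes it below -/
import Mathlib

section
/- Let g be a game on a finite graph, a a player with strict weak order preference ≺_a, h a history of g, s_a a strategy for a in the future game g^h, h' a history of g^h compatible with s_a, and s'_a a strategy for a in g^{h⌢h'}. Then: (1) h'⌢γ_a(h⌢h', s_a^{h'}) ⊆ γ_a(h, s_a); (2) if γ_a(h⌢h', s'_a) is a strict subset of γ_a(h⌢h', s_a^{h'}), then there exists ρ ∈ γ_a(h⌢h', s_a^{h'}) such that ρ ≺_a^{h⌢h'} ρ' for all ρ' ∈ γ_a(h⌢h', s'_a); (3) if γ_a(h⌢h', s'_a) ⊆ γ_a(h⌢h', s_a^{h'}), then h'⌢γ_a(h⌢h', s'_a) ⊆ γ_a(h, s_a). -/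
namespace GG

variable {V C A : Type}

/-- Append a finite list in front of an infinite sequence. -/
def appSeq (l : List V) (ρ : ℕ → V) : ℕ → V :=
  fun n => if n < l.length then l.getD n (ρ 0) else ρ (n - l.length)

/-- Glue two histories, identifying the last vertex of `l` with the first of `l'`. -/
def glueL (l l' : List V) : List V := l.dropLast ++ l'

/-- Glue a history with a run, identifying the last vertex of `l` with the start of `ρ`. -/
def glueR (l : List V) (ρ : ℕ → V) : ℕ → V := appSeq l.dropLast ρ

/-- Ultimately periodic (regular) sequence. -/
def UltPeriodic (ρ : ℕ → V) : Prop := ∃ k p : ℕ, 0 < p ∧ ∀ n, k ≤ n → ρ (n + p) = ρ n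

/-- Strict weak order: irreflexive, transitive, with transitive incomparability. -/
def SWO (r : (ℕ → C) → (ℕ → C) → Prop) : Prop :=
  (∀ x, ¬ r x x) ∧ (∀ x y z, r x y → r y z → r x z) ∧
    (∀ x y z, ¬ r x y → ¬ r y z → ¬ r x z)

/-- A strategy uses `m` bits of memory: it is induced by a strategic update
`σ : V × {0,1}^m → V × {0,1}^m` together with an initial memory content. -/
def UsesMem (m : ℕ) (s : List V → V) : Prop :=
  ∃ (σ : V × (Fin m → Bool) → V × (Fin m → Bool)) (M₀ : Fin m → Bool),
    ∀ (l : List V) (v : V),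
      s (l ++ [v]) = (σ (v, l.foldl (fun M u => (σ (u, M)).2) M₀)).1

/-- A finite-memory strategy. -/
def FinMem (s : List V → V) : Prop := ∃ m, UsesMem m s

/-- Regular language: recognized by a deterministic finite automaton. -/
def RegLang {α : Type} (L : Set (List α)) : Prop :=
  ∃ (Q : Type) (_ : Fintype Q) (step : Q → α → Q) (init : Q) (acc : Set Q),
    ∀ w : List α, w ∈ L ↔ w.foldl step init ∈ acc

/-- Repeat a finite word `n` times. -/
def repW (l : List C) (n : ℕ) : List C := (List.replicate n l).flatten

/-- The infinite word `u · w^ω` (with default letter `d`, unused when `w ≠ []`). -/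
def extWord (d : C) (u w : List C) : ℕ → C := fun n =>
  if n < u.length then u.getD n d else w.getD ((n - u.length) % w.length) d

/-- The regular-Mont condition for a preference on infinite color sequences. -/
def RegularMont (prec : (ℕ → C) → (ℕ → C) → Prop) : Prop :=
  ∀ (d : C) (h₀ h₁ h₂ h₃ : List C), h₁ ≠ [] → h₃ ≠ [] →
    (∀ n : ℕ, prec (extWord d (h₀ ++ repW h₁ n ++ h₂) h₃)
        (extWord d (h₀ ++ repW h₁ (n + 1) ++ h₂) h₃)) →
    prec (extWord d (h₀ ++ h₂) h₃) (extWord d h₀ h₁)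

/-- The weak optimality-is-regular property of a preference. -/
def WeakOIR (prec : (ℕ → C) → (ℕ → C) → Prop) : Prop :=
  ∀ p q : ℕ → C, UltPeriodic p → UltPeriodic q →
    ∃ M : Set (List C), RegLang M ∧ ∀ h : List C, h ∈ M ↔ prec (appSeq h p) (appSeq h q)

/-- Automatic-piecewise prefix-linearity of a preference on `C^ω` (word level). -/
def APPLword (prec : (ℕ → C) → (ℕ → C) → Prop) : Prop :=
  ∃ (Q : Type) (_ : Fintype Q) (step : Q → C → Q) (init : Q),
    ∀ h h' : List C, h.foldl step init = h'.foldl step init →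
      ∀ p q : ℕ → C,
        (prec (appSeq h p) (appSeq h q) ↔ prec (appSeq h' p) (appSeq h' q))

/-- A multi-player game played on a finite directed graph in which every
vertex has an outgoing edge. Players compare runs via color traces. -/
structure Game (V C A : Type) where
  edge : V → V → Prop
  serial : ∀ v, ∃ w, edge v w
  start : V
  owner : V → A
  color : V → C
  pref : A → (ℕ → C) → (ℕ → C) → Prop

/-- Shifted strategy `s^h`. -/
def shiftStrat (l : List V) (s : List V → V) : List V → V :=
  fun l' => s (l.dropLast ++ l')

namespace Game

variable (g : Game V C A)

def lastV (l : List V) : V := l.getLast?.getD g.start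

/-- Histories: finite paths starting at the start vertex. -/
def IsHist (l : List V) : Prop :=
  l ≠ [] ∧ l.head? = some g.start ∧ l.Chain' g.edge

/-- Runs: infinite paths starting at the start vertex. -/
def IsRun (ρ : ℕ → V) : Prop :=
  ρ 0 = g.start ∧ ∀ n, g.edge (ρ n) (ρ (n + 1))

/-- Runs are compared via their color traces. -/
def runPref (a : A) (ρ ρ' : ℕ → V) : Prop :=
  g.pref a (fun n => g.color (ρ n)) (fun n => g.color (ρ' n))

/-- Validity of a strategy on the set `P` of controlled vertices. -/
def ValidOn (P : V → Prop) (s : List V → V) : Prop :=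
  ∀ l, g.IsHist l → P (g.lastV l) → g.edge (g.lastV l) (s l)

def ValidStrat (a : A) (s : List V → V) : Prop :=
  g.ValidOn (fun v => g.owner v = a) s

/-- Validity for the coalition of all players other than `a`. -/
def ValidCo (a : A) (s : List V → V) : Prop :=
  g.ValidOn (fun v => g.owner v ≠ a) s

def _root_.GG.histUpTo (ρ : ℕ → V) (n : ℕ) : List V := (List.range (n + 1)).map ρ

def _root_.GG.CompatOn (P : V → Prop) (s : List V → V) (ρ : ℕ → V) : Prop :=
  ∀ n, P (ρ n) → ρ (n + 1) = s (GG.histUpTo ρ n)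

/-- A run is compatible with a strategy of player `a`. -/
def Compat (a : A) (s : List V → V) (ρ : ℕ → V) : Prop :=
  GG.CompatOn (fun v => g.owner v = a) s ρ

def CompatCo (a : A) (s : List V → V) (ρ : ℕ → V) : Prop :=
  GG.CompatOn (fun v => g.owner v ≠ a) s ρ

/-- `s` is a winning strategy of Player 1 (= player `a`) in the threshold game
`g_{a,ρ}`: every compatible run is strictly preferred to `ρ`. -/
def Wins1 (a : A) (ρ : ℕ → V) (s : List V → V) : Prop :=
  g.ValidStrat a s ∧ ∀ ρ', g.IsRun ρ' → g.Compat a s ρ' → g.runPref a ρ ρ'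

/-- `s` is a winning strategy of Player 2 (the coalition) in the threshold game `g_{a,ρ}`. -/
def Wins2 (a : A) (ρ : ℕ → V) (s : List V → V) : Prop :=
  g.ValidCo a s ∧ ∀ ρ', g.IsRun ρ' → g.CompatCo a s ρ' → ¬ g.runPref a ρ ρ'

/-- Player 1 wins the non-strict threshold game for `a` and `ρ` with `s`. -/
def Wins1NS (a : A) (ρ : ℕ → V) (s : List V → V) : Prop :=
  g.ValidStrat a s ∧ ∀ ρ', g.IsRun ρ' → g.Compat a s ρ' → ¬ g.runPref a ρ' ρ

/-- Player 2 wins the non-strict threshold game for `a` and `ρ` with `s`. -/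
def Wins2NS (a : A) (ρ : ℕ → V) (s : List V → V) : Prop :=
  g.ValidCo a s ∧ ∀ ρ', g.IsRun ρ' → g.CompatCo a s ρ' → g.runPref a ρ' ρ

/-- The future game `g^h` after history `l`. -/
def future (l : List V) : Game V C A where
  edge := g.edge
  serial := g.serial
  start := g.lastV l
  owner := g.owner
  color := g.color
  pref := fun a p q =>
    g.pref a (appSeq (l.dropLast.map g.color) p) (appSeq (l.dropLast.map g.color) q)

/-- The guarantee `γ_a(s)` of a strategy. -/
def gam (a : A) (s : List V → V) : Set (ℕ → V) :=
  {ρ | g.IsRun ρ ∧ ∃ ρ', g.IsRun ρ' ∧ g.Compat a s ρ' ∧ ¬ g.runPref a ρ ρ'}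

/-- The best guarantee `Γ_a`. -/
def Gam (a : A) : Set (ℕ → V) :=
  ⋂ s ∈ {s : List V → V | g.ValidStrat a s}, g.gam a s

def Optimal (a : A) (s : List V → V) : Prop := g.gam a s = g.Gam a

def OptimalAt (a : A) (s : List V → V) (l : List V) : Prop :=
  (g.future l).Optimal a (shiftStrat l s)

def SubgameOptimal (a : A) (s : List V → V) : Prop :=
  ∀ l, g.IsHist l → g.OptimalAt a s l

/-- A history is compatible with a strategy of player `a`. -/
def HistCompat (a : A) (s : List V → V) (l : List V) : Prop :=
  ∀ i : ℕ, i + 1 < l.length → g.owner (l.getD i g.start) = a →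
    l.getD (i + 1) g.start = s (l.take (i + 1))

def ConsistentOptimal (a : A) (s : List V → V) : Prop :=
  ∀ l, g.IsHist l → g.HistCompat a s l → g.OptimalAt a s l

/-- The history of the play induced by a strategy profile, up to stage `n`. -/
def playHist (prof : A → List V → V) : ℕ → List V
  | 0 => [g.start]
  | n + 1 =>
      playHist prof n ++
        [prof (g.owner (g.lastV (playHist prof n))) (playHist prof n)]

/-- The run induced by a strategy profile. -/
def play (prof : A → List V → V) : ℕ → V := fun n => g.lastV (g.playHist prof n)

/-- Nash equilibrium. -/
def IsNash [DecidableEq A] (prof : A → List V → V) : Prop :=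
  (∀ a, g.ValidStrat a (prof a)) ∧
    ∀ a s', g.ValidStrat a s' →
      ¬ g.runPref a (g.play prof) (g.play (Function.update prof a s'))

/-- Optimality of the strategy `s` of player `a` is regular using `D` bits. -/
def OptRegBits (a : A) (s : List V → V) (D : ℕ) : Prop :=
  ∃ (Q : Type) (_ : Fintype Q) (step : Q → V → Q) (init : Q) (acc : Set Q),
    Fintype.card Q ≤ 2 ^ D ∧
      ∀ l, g.IsHist l → (l.foldl step init ∈ acc ↔ g.OptimalAt a s l)

/-- Player `a` has the optimality-is-regular property in `g`. -/
def OIR (a : A) : Prop :=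
  ∀ s, g.ValidStrat a s → FinMem s →
    ∃ (Q : Type) (_ : Fintype Q) (step : Q → V → Q) (init : Q) (acc : Set Q),
      ∀ l, g.IsHist l → (l.foldl step init ∈ acc ↔ g.OptimalAt a s l)

/-- The two-player antagonistic game associated to player `a`: Player `true`
controls `V_a` with preference `≺_a`, Player `false` the remaining vertices
with the inverse preference. -/
def anta [DecidableEq A] (a : A) : Game V C Bool where
  edge := g.edge
  serial := g.serial
  start := g.start
  owner := fun v => decide (g.owner v = a)
  color := g.color
  pref := fun p x y => if p = true then g.pref a x y else g.pref a y x

/-- The cumulative glued histories `h₀⌢h₁⌢…⌢h_n`. -/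
def _root_.GG.cumul (h₀ : List V) (hs : ℕ → List V) : ℕ → List V
  | 0 => h₀
  | n + 1 => glueL (GG.cumul h₀ hs n) (hs n)

/-- The preference of player `a` is Mont in `g`. -/
def MontPref (a : A) : Prop :=
  ∀ (h₀ : List V) (ρ : ℕ → V) (hs : ℕ → List V),
    g.IsHist h₀ → UltPeriodic ρ →
    (∀ n, g.IsRun (glueR (GG.cumul h₀ hs n) ρ)) →
    (∀ n, g.runPref a (glueR (GG.cumul h₀ hs n) ρ) (glueR (GG.cumul h₀ hs (n + 1)) ρ)) →
    ∀ lim : ℕ → V,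
      (∀ n k, k < (GG.cumul h₀ hs n).dropLast.length →
        lim k = (GG.cumul h₀ hs n).dropLast.getD k g.start) →
      (∀ N, ∃ n, N < (GG.cumul h₀ hs n).dropLast.length) →
      g.runPref a (glueR h₀ ρ) lim

/-- Player `a`'s preference is automatic-piecewise prefix-linear in `g`. -/
def APPLin (a : A) : Prop :=
  ∃ (Q : Type) (_ : Fintype Q) (step : Q → V → Q) (init : Q),
    ∀ h h', g.IsHist h → g.IsHist h' →
      h.foldl step init = h'.foldl step init →
      g.lastV h = g.lastV h' ∧
        ∀ ρ ρ' : ℕ → V,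
          g.IsRun (glueR h ρ) → g.IsRun (glueR h ρ') →
          g.IsRun (glueR h' ρ) → g.IsRun (glueR h' ρ') →
          (g.runPref a (glueR h ρ) (glueR h ρ') ↔ g.runPref a (glueR h' ρ) (glueR h' ρ'))

end Game

end GG

/-!
The future game after `h⌢h'` is the future game after `h'` of the future game after `h`.
Gluing `h'` in front of runs of that game turns runs into runs, runs compatible with `s_a^{h'}`
into runs compatible with `s_a` (because `h'` itself is compatible with `s_a`), and preserves
preferences; this gives (1), and (3) follows by monotonicity of the image. For (2), a run `ρ`
of `γ_a(s_a^{h'})` outside `γ_a(s'_a)` is strictly below every run compatible with `s'_a`, so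
by transitivity of incomparability it is strictly below every run of `γ_a(s'_a)`.
-/

namespace GG

variable {V C A : Type}

theorem SWO.comap {r : (ℕ → C) → (ℕ → C) → Prop} (hr : SWO r) (f : (ℕ → C) → (ℕ → C)) :
    SWO fun x y => r (f x) (f y) :=
  ⟨fun _ => hr.1 _, fun _ _ _ => hr.2.1 _ _ _, fun _ _ _ => hr.2.2 _ _ _⟩

section appSeq

variable {l : List V} {ρ : ℕ → V} {n : ℕ}

theorem appSeq_of_lt (hn : n < l.length) : appSeq l ρ n = l[n] := by
  simp [appSeq, hn]

theorem appSeq_of_ge (hn : l.length ≤ n) : appSeq l ρ n = ρ (n - l.length) := by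
  simp [appSeq, Nat.not_lt.mpr hn]

theorem appSeq_append (u w : List V) (ρ : ℕ → V) :
    appSeq (u ++ w) ρ = appSeq u (appSeq w ρ) := by
  funext n
  rcases lt_or_ge n u.length with hn | hn
  · rw [appSeq_of_lt (by simp; omega), appSeq_of_lt hn, List.getElem_append_left hn]
  · rw [appSeq_of_ge hn]
    rcases lt_or_ge (n - u.length) w.length with hm | hm
    · rw [appSeq_of_lt hm, appSeq_of_lt (by simp; omega), List.getElem_append_right hn]
    · rw [appSeq_of_ge hm, appSeq_of_ge (by simp; omega), List.length_append, Nat.sub_add_eq]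

theorem comp_appSeq (f : V → C) (l : List V) (ρ : ℕ → V) :
    (fun n => f (appSeq l ρ n)) = appSeq (l.map f) (fun n => f (ρ n)) := by
  funext n
  rcases lt_or_ge n l.length with hn | hn
  · rw [appSeq_of_lt hn, appSeq_of_lt (by simpa using hn), List.getElem_map]
  · rw [appSeq_of_ge hn, appSeq_of_ge (by simpa using hn), List.length_map]

theorem isChain_appSeq {E : V → V → Prop} (hl : (l ++ [ρ 0]).IsChain E)
    (hρ : ∀ n, E (ρ n) (ρ (n + 1))) (n : ℕ) : E (appSeq l ρ n) (appSeq l ρ (n + 1)) := by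
  rcases lt_or_ge n l.length with hn | hn
  · have hE := hl.getElem n (by simp; omega)
    rw [List.getElem_append_left hn] at hE
    rcases lt_or_ge (n + 1) l.length with hn' | hn'
    · rwa [appSeq_of_lt hn, appSeq_of_lt hn', ← List.getElem_append_left (bs := [ρ 0]) hn']
    · rw [appSeq_of_lt hn, appSeq_of_ge hn', show n + 1 - l.length = 0 by omega]
      rwa [List.getElem_append_right (by omega), List.getElem_singleton] at hE
  · rw [appSeq_of_ge hn, appSeq_of_ge (by omega), show n + 1 - l.length = n - l.length + 1 by omega]
    exact hρ _

end appSeq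

section histUpTo

theorem length_histUpTo (τ : ℕ → V) (n : ℕ) : (histUpTo τ n).length = n + 1 := by
  simp [histUpTo]

theorem getElem_histUpTo (τ : ℕ → V) (n i : ℕ) (hi : i < (histUpTo τ n).length) :
    (histUpTo τ n)[i] = τ i := by
  simp [histUpTo]

theorem histUpTo_appSeq (l : List V) (σ : ℕ → V) {n : ℕ} (hn : l.length ≤ n) :
    histUpTo (appSeq l σ) n = l ++ histUpTo σ (n - l.length) := by
  apply List.ext_getElem
  · simp only [length_histUpTo, List.length_append]; omega
  · intro i _ _
    rw [getElem_histUpTo]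
    rcases lt_or_ge i l.length with hi | hi
    · rw [List.getElem_append_left hi, appSeq_of_lt hi]
    · rw [List.getElem_append_right hi, getElem_histUpTo, appSeq_of_ge hi]

theorem histUpTo_eq_take {l : List V} {τ : ℕ → V} {n : ℕ} (hn : n < l.length)
    (he : ∀ k (hk : k ≤ n), τ k = l[k]) : histUpTo τ n = l.take (n + 1) := by
  apply List.ext_getElem
  · simp only [length_histUpTo, List.length_take]; omega
  · intro i hi _
    rw [getElem_histUpTo, List.getElem_take]
    exact he i (by rw [length_histUpTo] at hi; omega)

end histUpTo

section glueR

variable {h' : List V} {ρ : ℕ → V} {k : ℕ}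

theorem glueR_of_lt (hne : h' ≠ []) (hρ0 : ρ 0 = h'.getLast hne) (hk : k < h'.length) :
    glueR h' ρ k = h'[k] := by
  rcases lt_or_ge k h'.dropLast.length with hk' | hk'
  · rw [glueR, appSeq_of_lt hk', List.getElem_dropLast]
  · have hlen : h'.dropLast.length = h'.length - 1 := List.length_dropLast
    rw [glueR, appSeq_of_ge hk', show k - h'.dropLast.length = 0 by omega, hρ0,
      List.getLast_eq_getElem]
    congr 1
    omega

theorem glueR_of_ge (hk : h'.length - 1 ≤ k) : glueR h' ρ k = ρ (k - (h'.length - 1)) := by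
  rw [glueR, appSeq_of_ge (by rwa [List.length_dropLast]), List.length_dropLast]

end glueR

namespace Game

variable (G : Game V C A)

theorem lastV_of_ne_nil {l : List V} (hl : l ≠ []) : G.lastV l = l.getLast hl := by
  simp [lastV, List.getLast?_eq_getLast_of_ne_nil hl]

theorem future_glueL (h : List V) {h' : List V} (hne : h' ≠ []) :
    G.future (glueL h h') = (G.future h).future h' := by
  have hstart : G.lastV (glueL h h') = (G.future h).lastV h' := by
    rw [lastV_of_ne_nil, lastV_of_ne_nil _ hne]
    exacts [List.getLast_append_of_ne_nil _ hne, by simp [glueL, hne]]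
  simp only [future] at hstart ⊢
  congr 1
  simp only [glueL, List.dropLast_append_of_ne_nil hne, List.map_append, appSeq_append]

theorem runPref_glueR_iff (a : A) (h' : List V) (ρ ρ' : ℕ → V) :
    G.runPref a (glueR h' ρ) (glueR h' ρ') ↔ (G.future h').runPref a ρ ρ' := by
  simp only [runPref, future, glueR, comp_appSeq]

variable {G} {a : A} {s : List V → V} {h' : List V} {ρ : ℕ → V}

theorem IsHist.isRun_glueR (hh' : G.IsHist h') (hρ : (G.future h').IsRun ρ) :
    G.IsRun (glueR h' ρ) := by
  obtain ⟨hne, hhead, hchain⟩ := hh'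
  obtain ⟨hρ0, hedge⟩ := hρ
  have hρ0' : ρ 0 = h'.getLast hne := hρ0.trans (G.lastV_of_ne_nil hne)
  have hpos : 0 < h'.length := List.length_pos_iff.mpr hne
  refine ⟨?_, isChain_appSeq ?_ hedge⟩
  · rw [glueR_of_lt hne hρ0' hpos, List.getElem_zero hpos]
    exact Option.some_injective _ ((List.head?_eq_some_head hne).symm.trans hhead)
  · rwa [hρ0', List.dropLast_append_getLast hne]

theorem HistCompat.compat_glueR (hc : G.HistCompat a s h') (hne : h' ≠ [])
    (hρ0 : ρ 0 = G.lastV h') (hρ : G.Compat a (shiftStrat h' s) ρ) :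
    G.Compat a s (glueR h' ρ) := by
  have hρ0' : ρ 0 = h'.getLast hne := hρ0.trans (G.lastV_of_ne_nil hne)
  intro n hown
  rcases lt_or_ge (n + 1) h'.length with hn | hn
  · have hprefix : histUpTo (glueR h' ρ) n = h'.take (n + 1) :=
      histUpTo_eq_take (by omega) fun k hk => glueR_of_lt hne hρ0' (by omega)
    rw [glueR_of_lt hne hρ0' (by omega)] at hown
    have := hc n hn (by rwa [List.getD_eq_getElem _ _ (by omega)])
    rwa [hprefix, glueR_of_lt hne hρ0' hn, ← List.getD_eq_getElem _ G.start hn]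
  · rw [glueR_of_ge (by omega)] at hown
    rw [glueR_of_ge (by omega), show n + 1 - (h'.length - 1) = n - (h'.length - 1) + 1 by omega,
      hρ _ hown, shiftStrat, glueR, histUpTo_appSeq _ _ (by rw [List.length_dropLast]; omega),
      List.length_dropLast]

theorem glueR_mem_gam (hh' : G.IsHist h') (hc : G.HistCompat a s h')
    (hρ : ρ ∈ (G.future h').gam a (shiftStrat h' s)) : glueR h' ρ ∈ G.gam a s := by
  obtain ⟨hrun, ρ', hrun', hcompat', hpref⟩ := hρ
  exact ⟨hh'.isRun_glueR hrun, glueR h' ρ', hh'.isRun_glueR hrun',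
    hc.compat_glueR hh'.1 hrun'.1 hcompat', mt (G.runPref_glueR_iff a h' ρ ρ').1 hpref⟩

theorem runPref_of_notMem_gam (hswo : SWO (G.pref a)) {ρ' : ℕ → V}
    (hρ : G.IsRun ρ) (hρs : ρ ∉ G.gam a s) (hρ' : ρ' ∈ G.gam a s) : G.runPref a ρ ρ' := by
  obtain ⟨-, σ, hσ, hσs, hρ'σ⟩ := hρ'
  have hρσ : G.runPref a ρ σ := by
    by_contra hρσ
    exact hρs ⟨hρ, σ, hσ, hσs, hρσ⟩
  by_contra hρρ'
  exact hswo.2.2 _ _ _ hρρ' hρ'σ hρσ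

end Game

end GG

open GG

theorem stmt7_general
    {V C A : Type}
    (g : GG.Game V C A) (a : A)
    (hswo : GG.SWO (g.pref a))
    (h : List V)
    (sa : List V → V)
    (h' : List V) (hh' : (g.future h).IsHist h')
    (hcomp : (g.future h).HistCompat a sa h')
    (sa' : List V → V) :
    -- (1)
    ((fun ρ => GG.glueR h' ρ) ''
        ((g.future (GG.glueL h h')).gam a (GG.shiftStrat h' sa))
      ⊆ (g.future h).gam a sa) ∧
    -- (2)
    ((g.future (GG.glueL h h')).gam a sa' ⊂
        (g.future (GG.glueL h h')).gam a (GG.shiftStrat h' sa) →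
      ∃ ρ ∈ (g.future (GG.glueL h h')).gam a (GG.shiftStrat h' sa),
        ∀ ρ' ∈ (g.future (GG.glueL h h')).gam a sa',
          (g.future (GG.glueL h h')).runPref a ρ ρ') ∧
    -- (3)
    ((g.future (GG.glueL h h')).gam a sa' ⊆
        (g.future (GG.glueL h h')).gam a (GG.shiftStrat h' sa) →
      (fun ρ => GG.glueR h' ρ) '' ((g.future (GG.glueL h h')).gam a sa')
        ⊆ (g.future h).gam a sa) := by
  have hswo' : SWO ((g.future (glueL h h')).pref a) := hswo.comap _
  rw [g.future_glueL h hh'.1] at hswo' ⊢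
  have himage : glueR h' '' ((g.future h).future h').gam a (shiftStrat h' sa)
      ⊆ (g.future h).gam a sa :=
    Set.image_subset_iff.2 fun _ hρ => Game.glueR_mem_gam hh' hcomp hρ
  refine ⟨himage, fun hss => ?_, fun hsub => (Set.image_mono hsub).trans himage⟩
  obtain ⟨ρ, hρ, hρs'⟩ := Set.not_subset.mp hss.2
  exact ⟨ρ, hρ, fun ρ' hρ' => Game.runPref_of_notMem_gam hswo' hρ.1 hρs' hρ'⟩

/-- Lemma 4.1: basic facts about guarantees and future games. -/
theorem stmt7
    {V C A : Type} [Fintype V]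
    (g : GG.Game V C A) (a : A)
    (hswo : GG.SWO (g.pref a))
    (h : List V) (hh : g.IsHist h)
    (sa : List V → V) (hsa : (g.future h).ValidStrat a sa)
    (h' : List V) (hh' : (g.future h).IsHist h')
    (hcomp : (g.future h).HistCompat a sa h')
    (sa' : List V → V) (hsa' : (g.future (GG.glueL h h')).ValidStrat a sa') :
    -- (1)
    ((fun ρ => GG.glueR h' ρ) ''
        ((g.future (GG.glueL h h')).gam a (GG.shiftStrat h' sa))
      ⊆ (g.future h).gam a sa) ∧
    -- (2)
    ((g.future (GG.glueL h h')).gam a sa' ⊂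
        (g.future (GG.glueL h h')).gam a (GG.shiftStrat h' sa) →
      ∃ ρ ∈ (g.future (GG.glueL h h')).gam a (GG.shiftStrat h' sa),
        ∀ ρ' ∈ (g.future (GG.glueL h h')).gam a sa',
          (g.future (GG.glueL h h')).runPref a ρ ρ') ∧
    -- (3)
    ((g.future (GG.glueL h h')).gam a sa' ⊆
        (g.future (GG.glueL h h')).gam a (GG.shiftStrat h' sa) →
      (fun ρ => GG.glueR h' ρ) '' ((g.future (GG.glueL h h')).gam a sa')
        ⊆ (g.future h).gam a sa) :=
  stmt7_general g a hswo h sa h' hh' hcomp sa'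
end

section
/- Let g be an antagonistic game with players a and b, and suppose there is m ∈ ℕ such that for every run ρ the threshold game g_{a,ρ} is determined via a winning strategy using m bits of memory. Then Γ_a ∩ Γ_b is nonempty and contains a regular (ultimately periodic) run; that is, the value of g has a regular witness. -/
open GG

/-!
There are only finitely many `m`-bit strategies, and `≺_a` is a strict weak order, so
maximin values over them are attained: for each `m`-bit strategy `ta` of `a` let `mb ta` be an
`m`-bit strategy of `b` minimising the outcome of `(ta, mb ta)`, and let `ta` maximise that
outcome `ρ`. A play of two finite-memory strategies on a finite graph is ultimately periodic.
By maximality `a` has no `m`-bit strategy beating `ρ`, so by determinacy `b` can keep every run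
at most `ρ`, whence `ρ ∈ Γ_a`. For `ρ ∈ Γ_b`, fix a strategy `sb` of `b` and an `m`-bit best
response of `a` with outcome `ρ'`; in the same way `b` has an `m`-bit strategy `tb` holding `a`
to at most `ρ'`, and minimality of `mb` gives `ρ ≤ outcome (ta, tb) ≤ ρ'`.
-/

namespace GG

theorem exists_forall_not_rel_image {α β : Type*} [Finite α] {r : β → β → Prop}
    (hirr : ∀ x, ¬ r x x) (htrans : ∀ x y z, r x y → r y z → r x z)
    (f : α → β) {S : Set α} (hS : S.Nonempty) :
    ∃ a ∈ S, ∀ x ∈ S, ¬ r (f a) (f x) := by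
  let r' : α → α → Prop := fun x y => r (f y) (f x)
  have : IsTrans α r' := ⟨fun _ _ _ hxy hyz => htrans _ _ _ hyz hxy⟩
  have : Std.Irrefl r' := ⟨fun x => hirr (f x)⟩
  exact (Finite.wellFounded_of_trans_of_irrefl r').has_min S hS

theorem UltPeriodic.comp {S T : Type} {f : ℕ → S} (hf : UltPeriodic f) (φ : S → T) :
    UltPeriodic (φ ∘ f) := by
  obtain ⟨k, p, hp, hper⟩ := hf
  exact ⟨k, p, hp, fun n hn => congrArg φ (hper n hn)⟩

theorem ultPeriodic_of_succ_eq {S : Type} [Finite S] (F : S → S) {f : ℕ → S}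
    (hf : ∀ n, f (n + 1) = F (f n)) : UltPeriodic f := by
  have shift : ∀ i j, i < j → f i = f j → ∀ n, i ≤ n → f (n + (j - i)) = f n := by
    intro i j hij heq n hn
    induction n, hn using Nat.le_induction with
    | base => rw [Nat.add_sub_cancel' hij.le]; exact heq.symm
    | succ n _ ih => rw [Nat.add_right_comm, hf, ih, hf]
  obtain ⟨i, j, hne, heq⟩ := Finite.exists_ne_map_eq_of_infinite f
  rcases hne.lt_or_gt with hij | hji
  · exact ⟨i, j - i, by omega, shift i j hij heq⟩
  · exact ⟨j, i - j, by omega, shift j i hji heq.symm⟩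

/-- The data `(σ, M₀)` of a strategy using `m` bits of memory, as in `UsesMem`. -/
abbrev Machine (V : Type) (m : ℕ) : Type :=
  (V × (Fin m → Bool) → V × (Fin m → Bool)) × (Fin m → Bool)

namespace Machine

variable {V : Type} {m : ℕ}

def mem (t : Machine V m) (l : List V) : Fin m → Bool :=
  l.foldl (fun M u => (t.1 (u, M)).2) t.2

theorem mem_concat (t : Machine V m) (l : List V) (v : V) :
    t.mem (l ++ [v]) = (t.1 (v, t.mem l)).2 :=
  List.foldl_concat _ _ _ _

end Machine

def profile {V : Type} (sa sb : List V → V) : Bool → List V → V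
  | true => sa
  | false => sb

namespace Game

variable {V C A : Type}

section Strategies

variable (g : Game V C A) {m : ℕ}

/-- On `[]`, which is no history, it answers as on `[g.start]`. -/
def stratOf (t : Machine V m) : List V → V :=
  fun l => (t.1 (g.lastV l, t.mem l.dropLast)).1

theorem stratOf_concat (t : Machine V m) (l : List V) (v : V) :
    g.stratOf t (l ++ [v]) = (t.1 (v, t.mem l)).1 := by
  simp [stratOf, lastV]

theorem nonempty_validOn_stratOf (P : V → Prop) :
    {t : Machine V m | g.ValidOn P (g.stratOf t)}.Nonempty := by
  choose next hnext using g.serial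
  exact ⟨(fun p => (next p.1, p.2), fun _ => false), fun _ _ _ => hnext _⟩

theorem _root_.GG.UsesMem.exists_eqOn_stratOf {s : List V → V} (hs : UsesMem m s) :
    ∃ t : Machine V m, Set.EqOn (g.stratOf t) s {l | l ≠ []} := by
  obtain ⟨σ, M₀, hs⟩ := hs
  refine ⟨(σ, M₀), fun l hl => ?_⟩
  obtain ⟨l, v, rfl⟩ := (List.eq_nil_or_concat' l).resolve_left hl
  rw [stratOf_concat, hs]
  rfl

variable {g} {s s' : List V → V}

theorem ValidOn.congr {P : V → Prop} (h : g.ValidOn P s) (hss' : Set.EqOn s s' {l | l ≠ []}) :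
    g.ValidOn P s' :=
  fun l hl hP => hss' hl.1 ▸ h l hl hP

theorem _root_.GG.CompatOn.congr {P : V → Prop} {ρ : ℕ → V} (h : CompatOn P s ρ)
    (hss' : Set.EqOn s s' {l | l ≠ []}) : CompatOn P s' ρ :=
  fun n hn => (h n hn).trans (hss' (by simp [histUpTo, List.range_succ]))

theorem Wins1.congr {a : A} {ρ : ℕ → V} (h : g.Wins1 a ρ s)
    (hss' : Set.EqOn s s' {l | l ≠ []}) : g.Wins1 a ρ s' :=
  ⟨h.1.congr hss', fun ρ' hρ' hc => h.2 ρ' hρ' (CompatOn.congr hc hss'.symm)⟩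

theorem Wins2.congr {a : A} {ρ : ℕ → V} (h : g.Wins2 a ρ s)
    (hss' : Set.EqOn s s' {l | l ≠ []}) : g.Wins2 a ρ s' :=
  ⟨ValidOn.congr h.1 hss', fun ρ' hρ' hc => h.2 ρ' hρ' (CompatOn.congr hc hss'.symm)⟩

end Strategies

section Play

variable (g : Game V C A) (prof : A → List V → V)

theorem play_succ (n : ℕ) :
    g.play prof (n + 1) = prof (g.owner (g.play prof n)) (g.playHist prof n) := by
  simp [play, playHist, lastV]

theorem playHist_succ (n : ℕ) :
    g.playHist prof (n + 1) = g.playHist prof n ++ [g.play prof (n + 1)] := by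
  rw [play_succ]
  rfl

theorem dropLast_playHist_append (n : ℕ) :
    (g.playHist prof n).dropLast ++ [g.play prof n] = g.playHist prof n := by
  cases n with
  | zero => rfl
  | succ n => rw [playHist_succ, List.dropLast_concat]

theorem playHist_eq_histUpTo (n : ℕ) : g.playHist prof n = histUpTo (g.play prof) n := by
  induction n with
  | zero => rfl
  | succ n ih => rw [playHist_succ, ih, histUpTo, histUpTo, List.range_succ (n := n + 1),
      List.map_append, List.map_singleton]

theorem compat_play (a : A) : g.Compat a (prof a) (g.play prof) := by
  intro n hn
  rw [play_succ, ← playHist_eq_histUpTo, hn]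

variable {g prof}

theorem edge_play_succ (hprof : ∀ a, g.ValidStrat a (prof a)) {n : ℕ}
    (hn : g.IsHist (g.playHist prof n)) : g.edge (g.play prof n) (g.play prof (n + 1)) := by
  rw [play_succ]
  exact hprof _ _ hn rfl

theorem isHist_playHist (hprof : ∀ a, g.ValidStrat a (prof a)) (n : ℕ) :
    g.IsHist (g.playHist prof n) := by
  induction n with
  | zero => exact ⟨List.cons_ne_nil _ _, rfl, List.isChain_singleton _⟩
  | succ n ih =>
    have hedge := edge_play_succ hprof ih
    obtain ⟨hne, hhead, hchain⟩ := ih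
    have hlast : (g.playHist prof n).getLast? = some (g.play prof n) := by
      rw [← dropLast_playHist_append, List.getLast?_concat]
    rw [playHist_succ]
    refine ⟨by simp, by rw [List.head?_append, hhead]; rfl,
      List.isChain_append.2 ⟨hchain, List.isChain_singleton _, ?_⟩⟩
    rintro x hx y ⟨⟩
    rw [hlast, Option.mem_some_iff] at hx
    exact hx ▸ hedge

theorem isRun_play (hprof : ∀ a, g.ValidStrat a (prof a)) : g.IsRun (g.play prof) :=
  ⟨rfl, fun n => edge_play_succ hprof (isHist_playHist hprof n)⟩

end Play

section TwoPlayer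

variable {g : Game V C Bool} {s sa sb : List V → V} {ρ : ℕ → V}

theorem validCo_true_iff : g.ValidCo true s ↔ g.ValidStrat false s := by
  simp only [ValidCo, ValidStrat, ne_eq, Bool.not_eq_true]

theorem compatCo_true_iff : g.CompatCo true s ρ ↔ g.Compat false s ρ := by
  simp only [CompatCo, Compat, ne_eq, Bool.not_eq_true]

theorem validStrat_profile (ha : g.ValidStrat true sa) (hb : g.ValidStrat false sb) :
    ∀ p, g.ValidStrat p (profile sa sb p)
  | true => ha
  | false => hb

theorem Wins1.runPref_play (h : g.Wins1 true ρ sa) (hb : g.ValidStrat false sb) :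
    g.runPref true ρ (g.play (profile sa sb)) :=
  h.2 _ (isRun_play (validStrat_profile h.1 hb)) (compat_play g _ true)

theorem Wins2.not_runPref_play (h : g.Wins2 true ρ sb) (ha : g.ValidStrat true sa) :
    ¬ g.runPref true ρ (g.play (profile sa sb)) :=
  h.2 _ (isRun_play (validStrat_profile ha (validCo_true_iff.1 h.1)))
    (compatCo_true_iff.2 (compat_play g _ false))

theorem mem_Gam_true_of_wins2 (hρ : g.IsRun ρ) (h : g.Wins2 true ρ sb) : ρ ∈ g.Gam true := by
  simp only [Gam, Set.mem_iInter]
  intro sa hsa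
  exact ⟨hρ, _, isRun_play (validStrat_profile hsa (validCo_true_iff.1 h.1)),
    compat_play g _ true, h.not_runPref_play hsa⟩

theorem mem_Gam_false_of_forall (hant : ∀ p q, g.pref false p q ↔ g.pref true q p)
    (hρ : g.IsRun ρ)
    (h : ∀ sb, g.ValidStrat false sb →
      ∃ ρ', g.IsRun ρ' ∧ g.Compat false sb ρ' ∧ ¬ g.runPref true ρ' ρ) :
    ρ ∈ g.Gam false := by
  simp only [Gam, Set.mem_iInter]
  intro sb hsb
  obtain ⟨ρ', hρ', hc, hle⟩ := h sb hsb
  exact ⟨hρ, ρ', hρ', hc, fun hlt => hle ((hant _ _).1 hlt)⟩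

variable {m : ℕ}

theorem ultPeriodic_play_stratOf [Finite V] (g : Game V C Bool) (ta tb : Machine V m) :
    UltPeriodic (g.play (profile (g.stratOf ta) (g.stratOf tb))) := by
  set prof := profile (g.stratOf ta) (g.stratOf tb)
  let F : V × (Fin m → Bool) × (Fin m → Bool) → V × (Fin m → Bool) × (Fin m → Bool) :=
    fun x => (bif g.owner x.1 then (ta.1 (x.1, x.2.1)).1 else (tb.1 (x.1, x.2.2)).1,
      (ta.1 (x.1, x.2.1)).2, (tb.1 (x.1, x.2.2)).2)
  let state : ℕ → V × (Fin m → Bool) × (Fin m → Bool) := fun n =>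
    (g.play prof n, ta.mem (g.playHist prof n).dropLast, tb.mem (g.playHist prof n).dropLast)
  have hstate : ∀ n, state (n + 1) = F (state n) := by
    intro n
    have hmem : ∀ t : Machine V m, t.mem (g.playHist prof n) =
        (t.1 (g.play prof n, t.mem (g.playHist prof n).dropLast)).2 := fun t => by
      conv_lhs => rw [← dropLast_playHist_append g prof n]
      exact Machine.mem_concat ..
    simp only [state, F, playHist_succ, List.dropLast_concat, hmem, play_succ]
    cases g.owner (g.play prof n) <;> rfl
  exact (ultPeriodic_of_succ_eq F hstate).comp Prod.fst

theorem not_exists_wins1_usesMem {sb : Machine V m → List V → V}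
    (hsb : ∀ t, g.ValidStrat false (sb t))
    (hρ : ∀ t, g.ValidStrat true (g.stratOf t) →
      ¬ g.runPref true ρ (g.play (profile (g.stratOf t) (sb t)))) :
    ¬ ∃ s, g.Wins1 true ρ s ∧ UsesMem m s := by
  rintro ⟨s, hwin, hmem⟩
  obtain ⟨t, ht⟩ := hmem.exists_eqOn_stratOf g
  have hwin' := hwin.congr ht.symm
  exact hρ t hwin'.1 (hwin'.runPref_play (hsb t))

def ThresholdDetermined (g : Game V C Bool) (m : ℕ) : Prop :=
  ∀ ρ, g.IsRun ρ →
    (∃ s, g.Wins1 true ρ s ∧ UsesMem m s) ∨ ∃ s, g.Wins2 true ρ s ∧ UsesMem m s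

theorem mem_Gam_true_of_forall_stratOf (hdet : g.ThresholdDetermined m) (hρ : g.IsRun ρ)
    {sb : Machine V m → List V → V} (hsb : ∀ t, g.ValidStrat false (sb t))
    (hmax : ∀ t, g.ValidStrat true (g.stratOf t) →
      ¬ g.runPref true ρ (g.play (profile (g.stratOf t) (sb t)))) :
    ρ ∈ g.Gam true := by
  obtain ⟨s, hs, -⟩ := (hdet ρ hρ).resolve_left (not_exists_wins1_usesMem hsb hmax)
  exact mem_Gam_true_of_wins2 hρ hs

theorem mem_Gam_false_of_forall_stratOf [Finite V] (hswo : SWO (g.pref true))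
    (hant : ∀ p q, g.pref false p q ↔ g.pref true q p) (hdet : g.ThresholdDetermined m)
    (hρ : g.IsRun ρ) (hsa : g.ValidStrat true sa)
    (hmin : ∀ t : Machine V m, g.ValidStrat false (g.stratOf t) →
      ¬ g.runPref true (g.play (profile sa (g.stratOf t))) ρ) :
    ρ ∈ g.Gam false := by
  refine mem_Gam_false_of_forall hant hρ fun sb hsb => ?_
  obtain ⟨ta, htaA, hta⟩ := exists_forall_not_rel_image (r := g.runPref true)
    (fun _ => hswo.1 _) (fun _ _ _ => hswo.2.1 _ _ _)
    (fun t : Machine V m => g.play (profile (g.stratOf t) sb))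
    (g.nonempty_validOn_stratOf (g.owner · = true))
  have hrun := isRun_play (validStrat_profile htaA hsb)
  obtain ⟨s, hs, hmem⟩ := (hdet _ hrun).resolve_left
    (not_exists_wins1_usesMem (fun _ => hsb) hta)
  obtain ⟨tb, htb⟩ := hmem.exists_eqOn_stratOf g
  have hs' := hs.congr htb.symm
  exact ⟨_, hrun, compat_play g _ false,
    hswo.2.2 _ _ _ (hs'.not_runPref_play hsa) (hmin tb (validCo_true_iff.1 hs'.1))⟩

end TwoPlayer

end Game

end GG

open Game

/-- Player `a` is `true`, player `b` is `false`. -/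
theorem stmt12
    {V C : Type} [Fintype V]
    (g : GG.Game V C Bool)
    (hswo : ∀ p, GG.SWO (g.pref p))
    (hant : ∀ p q, g.pref false p q ↔ g.pref true q p)
    (m : ℕ)
    (hdet : ∀ ρ, g.IsRun ρ →
      (∃ s, g.Wins1 true ρ s ∧ GG.UsesMem m s) ∨
      ∃ s, g.Wins2 true ρ s ∧ GG.UsesMem m s) :
    ∃ ρ, g.IsRun ρ ∧ GG.UltPeriodic ρ ∧ ρ ∈ g.Gam true ∩ g.Gam false := by
  obtain ⟨hirr, htrans, -⟩ := hswo true
  let out : Machine V m → Machine V m → ℕ → V := fun ta tb =>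
    g.play (profile (g.stratOf ta) (g.stratOf tb))
  choose mb hmbB hmb using fun ta => exists_forall_not_rel_image
    (r := flip (g.runPref true)) (fun _ => hirr _) (fun _ _ _ h₁ h₂ => htrans _ _ _ h₂ h₁)
    (out ta) (g.nonempty_validOn_stratOf (g.owner · = false))
  obtain ⟨ta, htaA, hta⟩ := exists_forall_not_rel_image (r := g.runPref true)
    (fun _ => hirr _) (fun _ _ _ => htrans _ _ _) (fun t => out t (mb t))
    (g.nonempty_validOn_stratOf (g.owner · = true))
  have hrun : g.IsRun (out ta (mb ta)) := isRun_play (validStrat_profile htaA (hmbB ta))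
  exact ⟨out ta (mb ta), hrun, ultPeriodic_play_stratOf g ta (mb ta),
    mem_Gam_true_of_forall_stratOf hdet hrun hmbB hta,
    mem_Gam_false_of_forall_stratOf (hswo true) hant hdet hrun htaA (hmb ta)⟩
end
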